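/- Let f : ℝⁿ → ℝ ∪ {+∞} be a radial function at p, i.e., f = h(‖· − p‖) for some h : [0,∞) → ℝ ∪ {+∞}. Then its p-based Fenchel conjugate is also radial: f*_p(y) = h*(‖y − p‖), where h*(s) = sup_{t ≥ 0} (s·t − h(t)). -/

import Mathlib

/-!
By Cauchy–Schwarz, `⟪v, w⟫ ≤ ‖v‖ * ‖w‖`, with equality when `w` lies on the ray through `v`
(any ray if `v = 0`). Hence the supremum defining the conjugate of a radial function only sees
`‖w‖`, and becomes the one-dimensional supremum over `t = ‖w‖ ≥ 0`.
-/

noncomputable def fconj {n : ℕ} (f : EuclideanSpace ℝ (Fin n) → EReal)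
    (p y : EuclideanSpace ℝ (Fin n)) : EReal :=
  ⨆ z, (((inner ℝ (y - p) (z - p) : ℝ) : EReal) - f z)

/-- One-dimensional conjugate restricted to `[0, ∞)`. -/
noncomputable def hconj (h : ℝ → EReal) (s : ℝ) : EReal :=
  ⨆ t : ℝ, ⨆ _ : 0 ≤ t, (((s * t : ℝ) : EReal) - h t)

open scoped RealInnerProductSpace

section

variable {E : Type*} [NormedAddCommGroup E] [InnerProductSpace ℝ E]

theorem exists_norm_eq_one_inner_eq_norm [Nontrivial E] (v : E) :
    ∃ u : E, ‖u‖ = 1 ∧ ⟪v, u⟫ = ‖v‖ := by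
  rcases eq_or_ne v 0 with rfl | hv
  · obtain ⟨u, hu⟩ := exists_norm_eq E zero_le_one
    exact ⟨u, hu, by simp⟩
  · refine ⟨‖v‖⁻¹ • v, norm_smul_inv_norm hv, ?_⟩
    rw [real_inner_smul_right, real_inner_self_eq_norm_sq]
    field_simp

theorem le_hconj (h : ℝ → EReal) (s : ℝ) {t : ℝ} (ht : 0 ≤ t) :
    ((s * t : ℝ) : EReal) - h t ≤ hconj h s :=
  le_iSup₂ (f := fun t (_ : 0 ≤ t) => ((s * t : ℝ) : EReal) - h t) t ht

theorem inner_sub_radial_le_hconj (h : ℝ → EReal) (v w : E) :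
    (⟪v, w⟫ : EReal) - h ‖w‖ ≤ hconj h ‖v‖ :=
  (EReal.sub_le_sub (EReal.coe_le_coe_iff.2 (real_inner_le_norm v w)) le_rfl).trans
    (le_hconj h ‖v‖ (norm_nonneg w))

theorem iSup_inner_sub_radial [Nontrivial E] (h : ℝ → EReal) (v : E) :
    ⨆ w : E, ((⟪v, w⟫ : EReal) - h ‖w‖) = hconj h ‖v‖ := by
  refine le_antisymm (iSup_le (inner_sub_radial_le_hconj h v)) (iSup₂_le fun t ht => ?_)
  obtain ⟨u, hu_norm, hu_inner⟩ := exists_norm_eq_one_inner_eq_norm v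
  have hnorm : ‖t • u‖ = t := by rw [norm_smul, hu_norm, Real.norm_of_nonneg ht, mul_one]
  have hinner : ⟪v, t • u⟫ = ‖v‖ * t := by rw [real_inner_smul_right, hu_inner, mul_comm]
  exact le_iSup_of_le (t • u) (by rw [hnorm, hinner])

end

theorem radial_conjugate {n : ℕ} (hn : 0 < n) (h : ℝ → EReal)
    (p : EuclideanSpace ℝ (Fin n)) :
    ∀ y, fconj (fun x => h ‖x - p‖) p y = hconj h ‖y - p‖ := by
  intro y
  have : Nonempty (Fin n) := Fin.pos_iff_nonempty.1 hn
  rw [← iSup_inner_sub_radial h (y - p)]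
  exact (Equiv.subRight p).iSup_comp (g := fun w => (⟪y - p, w⟫ : EReal) - h ‖w‖)
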